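/- For any linear map φ : M_n → M_k, ‖φ‖_cb ≤ min{k, n^{3/2}} · ‖φ‖. -/

import Mathlib

open scoped ComplexOrder

/-- The amplification `id_m ⊗ φ` of a linear map on matrices. -/
noncomputable def ampl {n k : ℕ} (m : ℕ)
    (φ : Matrix (Fin n) (Fin n) ℂ →ₗ[ℂ] Matrix (Fin k) (Fin k) ℂ) :
    Matrix (Fin m × Fin n) (Fin m × Fin n) ℂ →ₗ[ℂ]
      Matrix (Fin m × Fin k) (Fin m × Fin k) ℂ where
  toFun M := Matrix.of fun p q => φ (Matrix.of fun a b => M (p.1, a) (q.1, b)) p.2 q.2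
  map_add' M N := by
    ext p q
    show φ (Matrix.of fun a b => (M + N) (p.1, a) (q.1, b)) p.2 q.2
        = φ (Matrix.of fun a b => M (p.1, a) (q.1, b)) p.2 q.2
          + φ (Matrix.of fun a b => N (p.1, a) (q.1, b)) p.2 q.2
    rw [show (Matrix.of fun a b => (M + N) (p.1, a) (q.1, b))
        = (Matrix.of fun a b => M (p.1, a) (q.1, b))
          + (Matrix.of fun a b => N (p.1, a) (q.1, b)) from rfl, map_add]
    simp
  map_smul' c M := by
    ext p q
    show φ (Matrix.of fun a b => (c • M) (p.1, a) (q.1, b)) p.2 q.2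
        = c • φ (Matrix.of fun a b => M (p.1, a) (q.1, b)) p.2 q.2
    rw [show (Matrix.of fun a b => (c • M) (p.1, a) (q.1, b))
        = c • (Matrix.of fun a b => M (p.1, a) (q.1, b)) from rfl, map_smul]
    simp

/-- Operator (spectral) norm of a square complex matrix. -/
noncomputable def opN {n : Type*} [Fintype n] [DecidableEq n] (X : Matrix n n ℂ) : ℝ :=
  ‖(Matrix.toEuclideanCLM (𝕜 := ℂ) X : EuclideanSpace ℂ n →L[ℂ] EuclideanSpace ℂ n)‖

/-- Induced norm (w.r.t. operator norms) of a linear map between matrix algebras. -/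
noncomputable def mapNorm {a b : Type*} [Fintype a] [DecidableEq a] [Fintype b] [DecidableEq b]
    (ψ : Matrix a a ℂ →ₗ[ℂ] Matrix b b ℂ) : ℝ :=
  sSup {r : ℝ | ∃ X : Matrix a a ℂ, opN X ≤ 1 ∧ r = opN (ψ X)}

/-- The completely bounded norm `sup_m ‖id_m ⊗ φ‖`. -/
noncomputable def cbNorm {n k : ℕ}
    (φ : Matrix (Fin n) (Fin n) ℂ →ₗ[ℂ] Matrix (Fin k) (Fin k) ℂ) : ℝ :=
  ⨆ m : ℕ, mapNorm (ampl (m + 1) φ)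

/-- The positive semidefinite square root of a positive semidefinite matrix
(the definition of `Matrix.PosSemidef.sqrt` in the older Mathlib, since removed). -/
noncomputable def Matrix.PosSemidef.sqrt {n : Type*} [Fintype n] [DecidableEq n]
    {A : Matrix n n ℂ} (hA : A.PosSemidef) : Matrix n n ℂ :=
  (hA.1.eigenvectorUnitary : Matrix n n ℂ) *
    Matrix.diagonal (fun i => ((√(hA.1.eigenvalues i) : ℝ) : ℂ)) *
  (star hA.1.eigenvectorUnitary : Matrix n n ℂ)

/-- Trace norm of a matrix: the trace of `√(XᴴX)`. -/
noncomputable def traceNorm {a b : Type*} [Fintype a] [Fintype b] [DecidableEq b]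
    (X : Matrix a b ℂ) : ℝ :=
  ((Matrix.posSemidef_conjTranspose_mul_self X).sqrt.trace).re

/-- Induced trace-norm of a linear map between matrix algebras. -/
noncomputable def tMapNorm {a b : Type*} [Fintype a] [DecidableEq a] [Fintype b] [DecidableEq b]
    (ψ : Matrix a a ℂ →ₗ[ℂ] Matrix b b ℂ) : ℝ :=
  sSup {r : ℝ | ∃ X : Matrix a a ℂ, traceNorm X ≤ 1 ∧ r = traceNorm (ψ X)}

/-!
Both bounds come from estimating the coefficients `⟪ξ, (id_m ⊗ φ)(M) η⟫` with
`ξ, η ∈ ℂᵐ ⊗ ℂᵏ`, whose columns are `ξ_l, η_l ∈ ℂᵐ`.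

Bound `k`: the coefficient equals `∑_{l,l'} φ(C_{l l'})_{l l'}`, where
`C_{l l'} = (ξ_l ⊗ 1)ᴴ M (η_{l'} ⊗ 1)` is a compression of `M`, so
`‖C_{l l'}‖ ≤ ‖M‖ ‖ξ_l‖ ‖η_{l'}‖`. Then `∑_l ‖ξ_l‖ ≤ √k ‖ξ‖` by Cauchy–Schwarz, and likewise
for `η`.

Bound `n^{3/2}`: writing `φ(X) = ∑_{a,b} X_{ab} φ(E_{ab})` regroups the coefficient as
`∑_a ∑_l ⟪ξ_l ⊗ e_a, M Z_{a l}⟫` with `Z_{a l}(q, b) = (φ(E_{ab}) η^q)_l`, where `η^q ∈ ℂᵏ` are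
the rows of `η`. Since `‖φ(E_{ab})‖ ≤ ‖φ‖`, we get `∑_l ‖Z_{a l}‖² ≤ n ‖φ‖² ‖η‖²`, so
Cauchy–Schwarz over `l` bounds each `a`-term by `√n ‖φ‖ ‖M‖ ‖ξ‖ ‖η‖`. Summing over the `n`
values of `a` gives the result.
-/

open scoped Matrix.Norms.L2Operator ComplexConjugate InnerProductSpace
open Matrix WithLp

namespace Matrix
variable {ι : Type*} [Fintype ι] [DecidableEq ι]

lemma inner_toEuclideanCLM_eq_sum (A : Matrix ι ι ℂ) (x y : EuclideanSpace ℂ ι) :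
    ⟪x, toEuclideanCLM (𝕜 := ℂ) A y⟫_ℂ = ∑ i, ∑ j, conj (x i) * A i j * y j := by
  simp only [PiLp.inner_apply, RCLike.inner_apply, ofLp_toEuclideanCLM, mulVec, dotProduct,
    Finset.sum_mul]
  exact Finset.sum_congr rfl fun i _ => Finset.sum_congr rfl fun j _ => by ring

lemma norm_inner_toEuclideanCLM_le (A : Matrix ι ι ℂ) (x y : EuclideanSpace ℂ ι) :
    ‖⟪x, toEuclideanCLM (𝕜 := ℂ) A y⟫_ℂ‖ ≤ ‖A‖ * ‖x‖ * ‖y‖ :=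
  calc _ ≤ ‖x‖ * ‖toEuclideanCLM (𝕜 := ℂ) A y‖ := norm_inner_le_norm _ _
    _ ≤ ‖x‖ * (‖A‖ * ‖y‖) := by gcongr; exact (toEuclideanCLM (𝕜 := ℂ) A).le_opNorm y
    _ = _ := by ring

lemma l2_opNorm_le_of_norm_inner_le {A : Matrix ι ι ℂ} {c : ℝ} (hc : 0 ≤ c)
    (h : ∀ x y, ‖⟪x, toEuclideanCLM (𝕜 := ℂ) A y⟫_ℂ‖ ≤ c * ‖x‖ * ‖y‖) : ‖A‖ ≤ c := by
  refine ContinuousLinearMap.opNorm_le_of_re_inner_le hc fun x y hx hy => ?_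
  calc RCLike.re ⟪toEuclideanCLM (𝕜 := ℂ) A x, y⟫_ℂ
      ≤ ‖⟪y, toEuclideanCLM (𝕜 := ℂ) A x⟫_ℂ‖ := by
        rw [← norm_inner_symm]; exact RCLike.re_le_norm _
    _ ≤ c := by simpa [hx, hy] using h y x

lemma inner_single_toEuclideanCLM_single (A : Matrix ι ι ℂ) (i j : ι) :
    ⟪EuclideanSpace.single i 1, toEuclideanCLM (𝕜 := ℂ) A (EuclideanSpace.single j 1)⟫_ℂ =
      A i j := by
  simp [inner_toEuclideanCLM_eq_sum]

lemma norm_apply_le_l2_opNorm (A : Matrix ι ι ℂ) (i j : ι) : ‖A i j‖ ≤ ‖A‖ := by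
  simpa [inner_single_toEuclideanCLM_single] using
    norm_inner_toEuclideanCLM_le A (EuclideanSpace.single i 1) (EuclideanSpace.single j 1)

lemma l2_opNorm_single_one_le (i j : ι) : ‖single i j (1 : ℂ)‖ ≤ 1 := by
  refine l2_opNorm_le_of_norm_inner_le zero_le_one fun x y => ?_
  rw [inner_toEuclideanCLM_eq_sum]
  simp only [single_apply, ite_and, mul_ite, mul_one, mul_zero, ite_mul, zero_mul,
    Finset.sum_ite_irrel, Finset.sum_ite_eq, Finset.mem_univ, ↓reduceIte, Finset.sum_const_zero,
    Complex.norm_mul, RCLike.norm_conj, one_mul]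
  exact mul_le_mul (PiLp.norm_apply_le x i) (PiLp.norm_apply_le y j) (norm_nonneg _)
    (norm_nonneg _)

end Matrix

lemma map_apply_eq_sum_single {ι κ : Type*} [Fintype ι] [DecidableEq ι]
    (ψ : Matrix ι ι ℂ →ₗ[ℂ] Matrix κ κ ℂ) (X : Matrix ι ι ℂ) (l l' : κ) :
    ψ X l l' = ∑ i, ∑ j, X i j * ψ (single i j 1) l l' := by
  conv_lhs => rw [matrix_eq_sum_single X]
  simp only [map_sum, Matrix.sum_apply]
  refine Finset.sum_congr rfl fun i _ => Finset.sum_congr rfl fun j _ => ?_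
  rw [← mul_one (X i j), ← smul_eq_mul, ← smul_single, map_smul]
  simp

section MapNorm
variable {a b : Type*} [Fintype a] [DecidableEq a] [Fintype b] [DecidableEq b]
  (ψ : Matrix a a ℂ →ₗ[ℂ] Matrix b b ℂ)

lemma mapNorm_eq_opNorm : mapNorm ψ = ‖LinearMap.toContinuousLinearMap ψ‖ := by
  rw [← ContinuousLinearMap.sSup_unitClosedBall_eq_norm, mapNorm]
  congr 1
  ext r
  simp [opN, eq_comm, Matrix.cstar_norm_def]

lemma mapNorm_nonneg : 0 ≤ mapNorm ψ := by
  rw [mapNorm_eq_opNorm]; exact norm_nonneg _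

lemma norm_apply_le_mapNorm_mul (X : Matrix a a ℂ) : ‖ψ X‖ ≤ mapNorm ψ * ‖X‖ := by
  rw [mapNorm_eq_opNorm]; exact (LinearMap.toContinuousLinearMap ψ).le_opNorm X

lemma mapNorm_le_of_norm_apply_le {c : ℝ} (hc : 0 ≤ c) (h : ∀ X, ‖ψ X‖ ≤ c * ‖X‖) :
    mapNorm ψ ≤ c := by
  rw [mapNorm_eq_opNorm]; exact ContinuousLinearMap.opNorm_le_bound _ hc h

lemma norm_map_single_one_le (i j : a) : ‖ψ (single i j 1)‖ ≤ mapNorm ψ := by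
  simpa using (norm_apply_le_mapNorm_mul ψ _).trans
    (mul_le_mul_of_nonneg_left (l2_opNorm_single_one_le i j) (mapNorm_nonneg ψ))

end MapNorm

namespace EuclideanSpace
variable {μ ι : Type*}

def tensor (x : EuclideanSpace ℂ μ) (u : EuclideanSpace ℂ ι) : EuclideanSpace ℂ (μ × ι) :=
  toLp 2 fun pa => x pa.1 * u pa.2

def col (ξ : EuclideanSpace ℂ (μ × ι)) (l : ι) : EuclideanSpace ℂ μ := toLp 2 fun p => ξ (p, l)

def row (ξ : EuclideanSpace ℂ (μ × ι)) (p : μ) : EuclideanSpace ℂ ι := toLp 2 fun l => ξ (p, l)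

@[simp] lemma tensor_apply (x : EuclideanSpace ℂ μ) (u : EuclideanSpace ℂ ι) (pa : μ × ι) :
    tensor x u pa = x pa.1 * u pa.2 := rfl

@[simp] lemma col_apply (ξ : EuclideanSpace ℂ (μ × ι)) (l : ι) (p : μ) : col ξ l p = ξ (p, l) := rfl

@[simp] lemma row_apply (ξ : EuclideanSpace ℂ (μ × ι)) (p : μ) (l : ι) : row ξ p l = ξ (p, l) := rfl

variable [Fintype μ] [Fintype ι]

lemma norm_tensor (x : EuclideanSpace ℂ μ) (u : EuclideanSpace ℂ ι) :
    ‖tensor x u‖ = ‖x‖ * ‖u‖ := by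
  rw [← sq_eq_sq₀ (norm_nonneg _) (by positivity), mul_pow, norm_sq_eq, norm_sq_eq, norm_sq_eq,
    Fintype.sum_prod_type, Finset.sum_mul_sum]
  simp [mul_pow]

lemma sum_norm_col_sq (ξ : EuclideanSpace ℂ (μ × ι)) : ∑ l, ‖col ξ l‖ ^ 2 = ‖ξ‖ ^ 2 := by
  simp only [norm_sq_eq, col_apply, Fintype.sum_prod_type]
  exact Finset.sum_comm

lemma sum_norm_row_sq (ξ : EuclideanSpace ℂ (μ × ι)) : ∑ p, ‖row ξ p‖ ^ 2 = ‖ξ‖ ^ 2 := by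
  simp only [norm_sq_eq, row_apply, Fintype.sum_prod_type]

lemma sum_norm_col_le (ξ : EuclideanSpace ℂ (μ × ι)) :
    ∑ l, ‖col ξ l‖ ≤ √(Fintype.card ι) * ‖ξ‖ := by
  simpa [sum_norm_col_sq, Real.sqrt_sq (norm_nonneg ξ)] using
    Real.sum_mul_le_sqrt_mul_sqrt Finset.univ (fun _ => 1) (fun l => ‖col ξ l‖)

end EuclideanSpace

namespace Matrix
variable {μ ι : Type*} [Fintype μ] [DecidableEq μ] [Fintype ι] [DecidableEq ι]

def compress (M : Matrix (μ × ι) (μ × ι) ℂ) (x y : EuclideanSpace ℂ μ) : Matrix ι ι ℂ :=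
  ∑ p, ∑ q, (conj (x p) * y q) • (comp μ μ ι ι ℂ).symm M p q

lemma inner_compress (M : Matrix (μ × ι) (μ × ι) ℂ) (x y : EuclideanSpace ℂ μ)
    (u v : EuclideanSpace ℂ ι) :
    ⟪u, toEuclideanCLM (𝕜 := ℂ) (compress M x y) v⟫_ℂ =
      ⟪x.tensor u, toEuclideanCLM (𝕜 := ℂ) M (y.tensor v)⟫_ℂ := by
  simp only [inner_toEuclideanCLM_eq_sum, compress, Fintype.sum_prod_type, sum_apply, smul_apply,
    comp_symm_apply, smul_eq_mul, Finset.mul_sum, Finset.sum_mul, EuclideanSpace.tensor_apply,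
    map_mul]
  rw [Finset.sum_congr rfl fun a _ => Finset.sum_comm, Finset.sum_comm]
  refine Finset.sum_congr rfl fun p _ => Finset.sum_congr rfl fun a _ => ?_
  rw [Finset.sum_comm]
  exact Finset.sum_congr rfl fun q _ => Finset.sum_congr rfl fun b _ => by ring

lemma compress_apply (M : Matrix (μ × ι) (μ × ι) ℂ) (x y : EuclideanSpace ℂ μ) (a b : ι) :
    compress M x y a b = ⟪x.tensor (EuclideanSpace.single a 1),
      toEuclideanCLM (𝕜 := ℂ) M (y.tensor (EuclideanSpace.single b 1))⟫_ℂ := by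
  rw [← inner_compress, inner_single_toEuclideanCLM_single]

lemma norm_compress_le (M : Matrix (μ × ι) (μ × ι) ℂ) (x y : EuclideanSpace ℂ μ) :
    ‖compress M x y‖ ≤ ‖M‖ * ‖x‖ * ‖y‖ := by
  refine l2_opNorm_le_of_norm_inner_le (by positivity) fun u v => ?_
  rw [inner_compress]
  calc _ ≤ ‖M‖ * ‖x.tensor u‖ * ‖y.tensor v‖ := norm_inner_toEuclideanCLM_le _ _ _
    _ = ‖M‖ * ‖x‖ * ‖y‖ * ‖u‖ * ‖v‖ := by
        rw [EuclideanSpace.norm_tensor, EuclideanSpace.norm_tensor]; ring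

end Matrix

section SingleImage
variable {μ ι κ : Type*} [Fintype ι] [DecidableEq ι] [Fintype κ] [DecidableEq κ]
  (φ : Matrix ι ι ℂ →ₗ[ℂ] Matrix κ κ ℂ)

noncomputable def singleImageVec (η : EuclideanSpace ℂ (μ × κ)) (a : ι) (l : κ) :
    EuclideanSpace ℂ (μ × ι) :=
  toLp 2 fun qb => toEuclideanCLM (𝕜 := ℂ) (φ (single a qb.2 1)) (η.row qb.1) l

lemma singleImageVec_eq_sum (η : EuclideanSpace ℂ (μ × κ)) (a : ι) (l : κ) :
    singleImageVec φ η a l =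
      ∑ b, ∑ l', φ (single a b 1) l l' • (η.col l').tensor (EuclideanSpace.single b 1) := by
  ext ⟨q, b⟩
  simp [singleImageVec, mulVec, dotProduct]

lemma sum_norm_singleImageVec_sq_le [Fintype μ] (η : EuclideanSpace ℂ (μ × κ)) (a : ι) :
    ∑ l, ‖singleImageVec φ η a l‖ ^ 2 ≤ Fintype.card ι * (mapNorm φ * ‖η‖) ^ 2 :=
  calc ∑ l, ‖singleImageVec φ η a l‖ ^ 2
      = ∑ q, ∑ b, ‖toEuclideanCLM (𝕜 := ℂ) (φ (single a b 1)) (η.row q)‖ ^ 2 := by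
        simp only [EuclideanSpace.norm_sq_eq, singleImageVec, Fintype.sum_prod_type]
        rw [Finset.sum_comm]
        exact Finset.sum_congr rfl fun q _ => Finset.sum_comm
    _ ≤ ∑ q, ∑ _b : ι, (mapNorm φ * ‖η.row q‖) ^ 2 := by
        gcongr with q _ b _
        calc _ ≤ ‖φ (single a b 1)‖ * ‖η.row q‖ :=
              (toEuclideanCLM (𝕜 := ℂ) (φ (single a b 1))).le_opNorm (η.row q)
          _ ≤ _ := by gcongr; exact norm_map_single_one_le φ a b
    _ = Fintype.card ι * (mapNorm φ * ‖η‖) ^ 2 := by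
        simp [mul_pow, ← Finset.mul_sum, EuclideanSpace.sum_norm_row_sq]

end SingleImage

section Amplification
variable {n k m : ℕ} (φ : Matrix (Fin n) (Fin n) ℂ →ₗ[ℂ] Matrix (Fin k) (Fin k) ℂ)
  (M : Matrix (Fin m × Fin n) (Fin m × Fin n) ℂ)

lemma ampl_apply (p q : Fin m) (l l' : Fin k) :
    ampl m φ M (p, l) (q, l') = φ ((comp _ _ _ _ ℂ).symm M p q) l l' := rfl

lemma inner_ampl_eq_sum_compress (ξ η : EuclideanSpace ℂ (Fin m × Fin k)) :
    ⟪ξ, toEuclideanCLM (𝕜 := ℂ) (ampl m φ M) η⟫_ℂ =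
      ∑ l, ∑ l', φ (compress M (ξ.col l) (η.col l')) l l' := by
  simp only [inner_toEuclideanCLM_eq_sum, compress, Fintype.sum_prod_type, ampl_apply, map_sum,
    map_smul, Matrix.sum_apply, Matrix.smul_apply, smul_eq_mul, EuclideanSpace.col_apply]
  rw [Finset.sum_comm]
  refine Finset.sum_congr rfl fun l _ => ?_
  rw [Finset.sum_congr rfl fun p _ => Finset.sum_comm, Finset.sum_comm]
  exact Finset.sum_congr rfl fun l' _ => Finset.sum_congr rfl fun p _ =>
    Finset.sum_congr rfl fun q _ => by ring

lemma inner_ampl_eq_sum_inner_singleImageVec (ξ η : EuclideanSpace ℂ (Fin m × Fin k)) :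
    ⟪ξ, toEuclideanCLM (𝕜 := ℂ) (ampl m φ M) η⟫_ℂ =
      ∑ a, ∑ l, ⟪(ξ.col l).tensor (EuclideanSpace.single a 1),
        toEuclideanCLM (𝕜 := ℂ) M (singleImageVec φ η a l)⟫_ℂ := by
  rw [inner_ampl_eq_sum_compress]
  simp only [map_apply_eq_sum_single φ (compress _ _ _), compress_apply, singleImageVec_eq_sum,
    map_sum, map_smul, inner_sum, inner_smul_right]
  rw [Finset.sum_congr rfl fun l _ => Finset.sum_comm, Finset.sum_comm]
  refine Finset.sum_congr rfl fun a _ => Finset.sum_congr rfl fun l _ => ?_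
  rw [Finset.sum_comm]
  exact Finset.sum_congr rfl fun b _ => Finset.sum_congr rfl fun l' _ => mul_comm _ _

lemma norm_ampl_apply_le_card_mul : ‖ampl m φ M‖ ≤ k * mapNorm φ * ‖M‖ := by
  have hφ := mapNorm_nonneg φ
  refine l2_opNorm_le_of_norm_inner_le (by positivity) fun ξ η => ?_
  have hentry (l l' : Fin k) : ‖φ (compress M (ξ.col l) (η.col l')) l l'‖ ≤
      mapNorm φ * ‖M‖ * (‖ξ.col l‖ * ‖η.col l'‖) :=
    calc _ ≤ ‖φ (compress M (ξ.col l) (η.col l'))‖ := norm_apply_le_l2_opNorm _ _ _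
      _ ≤ mapNorm φ * ‖compress M (ξ.col l) (η.col l')‖ := norm_apply_le_mapNorm_mul _ _
      _ ≤ mapNorm φ * (‖M‖ * ‖ξ.col l‖ * ‖η.col l'‖) := by gcongr; exact norm_compress_le _ _ _
      _ = _ := by ring
  rw [inner_ampl_eq_sum_compress]
  calc _ ≤ ∑ l, ∑ l', ‖φ (compress M (ξ.col l) (η.col l')) l l'‖ :=
        (norm_sum_le _ _).trans (Finset.sum_le_sum fun l _ => norm_sum_le _ _)
    _ ≤ ∑ l, ∑ l', mapNorm φ * ‖M‖ * (‖ξ.col l‖ * ‖η.col l'‖) := by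
        gcongr with l _ l' _; exact hentry l l'
    _ = mapNorm φ * ‖M‖ * ((∑ l, ‖ξ.col l‖) * ∑ l', ‖η.col l'‖) := by
        rw [Finset.sum_mul_sum, Finset.mul_sum]; simp_rw [Finset.mul_sum]
    _ ≤ mapNorm φ * ‖M‖ * ((√k * ‖ξ‖) * (√k * ‖η‖)) := by
        gcongr
        · simpa using EuclideanSpace.sum_norm_col_le ξ
        · simpa using EuclideanSpace.sum_norm_col_le η
    _ = k * mapNorm φ * ‖M‖ * ‖ξ‖ * ‖η‖ := by
        linear_combination mapNorm φ * ‖M‖ * ‖ξ‖ * ‖η‖ * Real.mul_self_sqrt (Nat.cast_nonneg k)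

lemma norm_ampl_apply_le_card_mul_sqrt_card : ‖ampl m φ M‖ ≤ n * √n * mapNorm φ * ‖M‖ := by
  have hφ := mapNorm_nonneg φ
  refine l2_opNorm_le_of_norm_inner_le (by positivity) fun ξ η => ?_
  have hrow (a : Fin n) : ‖∑ l, ⟪(ξ.col l).tensor (EuclideanSpace.single a 1),
      toEuclideanCLM (𝕜 := ℂ) M (singleImageVec φ η a l)⟫_ℂ‖ ≤
        √n * mapNorm φ * ‖M‖ * ‖ξ‖ * ‖η‖ :=
    calc _ ≤ ∑ l, ‖M‖ * ‖ξ.col l‖ * ‖singleImageVec φ η a l‖ :=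
          (norm_sum_le _ _).trans <| Finset.sum_le_sum fun l _ =>
            (norm_inner_toEuclideanCLM_le M _ _).trans_eq <| by
              rw [EuclideanSpace.norm_tensor, PiLp.norm_single, norm_one, mul_one]
      _ = ‖M‖ * ∑ l, ‖ξ.col l‖ * ‖singleImageVec φ η a l‖ := by
          rw [Finset.mul_sum]; simp_rw [mul_assoc]
      _ ≤ ‖M‖ * (√(∑ l, ‖ξ.col l‖ ^ 2) * √(∑ l, ‖singleImageVec φ η a l‖ ^ 2)) := by
          gcongr; exact Real.sum_mul_le_sqrt_mul_sqrt _ _ _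
      _ ≤ ‖M‖ * (‖ξ‖ * √(n * (mapNorm φ * ‖η‖) ^ 2)) := by
          rw [EuclideanSpace.sum_norm_col_sq, Real.sqrt_sq (norm_nonneg _)]
          gcongr
          simpa using sum_norm_singleImageVec_sq_le φ η a
      _ = _ := by
          rw [Real.sqrt_mul (Nat.cast_nonneg n), Real.sqrt_sq (by positivity)]; ring
  rw [inner_ampl_eq_sum_inner_singleImageVec]
  calc _ ≤ ∑ a : Fin n, √n * mapNorm φ * ‖M‖ * ‖ξ‖ * ‖η‖ :=
        (norm_sum_le _ _).trans (Finset.sum_le_sum fun a _ => hrow a)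
    _ = n * √n * mapNorm φ * ‖M‖ * ‖ξ‖ * ‖η‖ := by
        rw [Finset.sum_const, Finset.card_univ, Fintype.card_fin, nsmul_eq_mul]; ring

end Amplification

/-- `‖φ‖_cb ≤ min {k, n^(3/2)} ⬝ ‖φ‖` for `φ : M_n → M_k`. -/
theorem cbNorm_le_min_mul_mapNorm {n k : ℕ}
    (φ : Matrix (Fin n) (Fin n) ℂ →ₗ[ℂ] Matrix (Fin k) (Fin k) ℂ) :
    cbNorm φ ≤ min (k : ℝ) ((n : ℝ) ^ ((3 : ℝ) / 2)) * mapNorm φ := by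
  have hφ := mapNorm_nonneg φ
  have hpow : (n : ℝ) ^ ((3 : ℝ) / 2) = n * √n := by
    rw [show (3 : ℝ) / 2 = 1 + 1 / 2 by norm_num, Real.rpow_add' (Nat.cast_nonneg n) (by norm_num),
      Real.rpow_one, Real.sqrt_eq_rpow]
  refine ciSup_le fun m => mapNorm_le_of_norm_apply_le _ (by positivity) fun M => ?_
  rw [min_mul_of_nonneg _ _ hφ, min_mul_of_nonneg _ _ (norm_nonneg M), hpow]
  exact le_min (norm_ampl_apply_le_card_mul φ M) (norm_ampl_apply_le_card_mul_sqrt_card φ M)
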